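/- For idempotents f_1, f_2 of the Kiselman semigroup K_n, the natural order f_1 ≤ f_2 (meaning f_1 f_2 = f_2 f_1 = f_1) holds if and only if the content of f_2 is contained in the content of f_1. -/

import Mathlib

/-- The defining relations of the Kiselman semigroup `K_n`:
`aᵢ² = aᵢ`, and `aᵢaⱼaᵢ = aⱼaᵢaⱼ = aⱼaᵢ` for `i < j`. -/
inductive KisRel (n : ℕ) : FreeMonoid (Fin n) → FreeMonoid (Fin n) → Prop
  | idem (i : Fin n) : KisRel n (.of i * .of i) (.of i)
  | braid₁ {i j : Fin n} (h : i < j) :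
      KisRel n (.of i * .of j * .of i) (.of j * .of i)
  | braid₂ {i j : Fin n} (h : i < j) :
      KisRel n (.of j * .of i * .of j) (.of j * .of i)

/-- The Kiselman semigroup (monoid) `K_n`. -/
abbrev Kiselman (n : ℕ) := PresentedMonoid (KisRel n)

/-- The canonical projection from the free monoid on the generators to `K_n`. -/
def kmk (n : ℕ) : FreeMonoid (Fin n) →* Kiselman n := PresentedMonoid.mk (KisRel n)

/-- The generator `a_{i+1}` (0-indexed: `ka i` is the paper's `a_{i+1}`). -/
def ka {n : ℕ} (i : Fin n) : Kiselman n := PresentedMonoid.of (KisRel n) i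

/-- The idempotent `e_X`: the product of the generators indexed by `X` in strictly
decreasing order of indices. -/
def eX {n : ℕ} (X : Finset (Fin n)) : Kiselman n :=
  kmk n (FreeMonoid.ofList ((X.sort (· ≤ ·)).reverse))

/-!
Write `e_X = u a_j w` for `j ∈ X`, where the letters of `u` exceed `j` and those of `w` are
below `j`. The relations give `a_j w a_j = a_j w` and `a_j u a_j = u a_j`, so `e_X` absorbs
`a_j` on both sides, hence absorbs every element generated by `{a_j | j ∈ X}`, in particular
`e_Y` when `Y ⊆ X`. Conversely, the homomorphism `K_n → (ℕ, ·)` sending `a_j` to `0` and the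
other generators to `1` is well defined (commuting idempotents satisfy the relations) and
detects whether `j` lies in the content, so `e_X e_Y = e_X` forces `Y ⊆ X`.
-/

section Absorption

variable {M : Type*} [Monoid M] {S : Set M} {e w : M}

theorem Submonoid.mul_eq_left_of_mem_closure (hS : ∀ s ∈ S, e * s = e)
    (hw : w ∈ Submonoid.closure S) : e * w = e := by
  induction hw using Submonoid.closure_induction with
  | mem s hs => exact hS s hs
  | one => exact mul_one e
  | mul u v _ _ hu hv => rw [← mul_assoc, hu, hv]

theorem Submonoid.mul_eq_right_of_mem_closure (hS : ∀ s ∈ S, s * e = e)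
    (hw : w ∈ Submonoid.closure S) : w * e = e := by
  induction hw using Submonoid.closure_induction with
  | mem s hs => exact hS s hs
  | one => exact one_mul e
  | mul u v _ _ hu hv => rw [mul_assoc, hv, hu]

theorem IsIdempotentElem.mul_mul_self_eq_self_mul_of_mem_closure (he : IsIdempotentElem e)
    (hS : ∀ s ∈ S, e * s * e = e * s) (hw : w ∈ Submonoid.closure S) : e * w * e = e * w := by
  induction hw using Submonoid.closure_induction with
  | mem s hs => exact hS s hs
  | one => rw [mul_one, he.eq]
  | mul u v _ _ hu hv =>
    calc e * (u * v) * e = e * u * e * v * e := by rw [hu]; simp only [mul_assoc]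
      _ = e * u * (e * v * e) := by simp only [mul_assoc]
      _ = e * u * e * v := by rw [hv]; simp only [mul_assoc]
      _ = e * (u * v) := by rw [hu, mul_assoc]

theorem IsIdempotentElem.mul_mul_self_eq_mul_self_of_mem_closure (he : IsIdempotentElem e)
    (hS : ∀ s ∈ S, e * s * e = s * e) (hw : w ∈ Submonoid.closure S) : e * w * e = w * e := by
  induction hw using Submonoid.closure_induction with
  | mem s hs => exact hS s hs
  | one => rw [mul_one, he.eq, one_mul]
  | mul u v _ _ hu hv =>
    calc e * (u * v) * e = e * u * (e * v * e) := by rw [hv]; simp only [mul_assoc]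
      _ = e * u * e * v * e := by simp only [mul_assoc]
      _ = u * (e * v * e) := by rw [hu]; simp only [mul_assoc]
      _ = u * v * e := by rw [hv, mul_assoc]

end Absorption

namespace Kiselman

variable {n : ℕ} {i j : Fin n}

theorem isIdempotentElem_ka (i : Fin n) : IsIdempotentElem (ka i) := by
  have hrel := PresentedMonoid.mk_eq_mk_of_rel (KisRel.idem i)
  simp only [map_mul] at hrel
  exact hrel

theorem ka_mul_ka_mul_ka_of_lt (h : i < j) : ka i * ka j * ka i = ka j * ka i := by
  have hrel := PresentedMonoid.mk_eq_mk_of_rel (KisRel.braid₁ h)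
  simp only [map_mul] at hrel
  exact hrel

theorem ka_mul_ka_mul_ka_of_gt (h : i < j) : ka j * ka i * ka j = ka j * ka i := by
  have hrel := PresentedMonoid.mk_eq_mk_of_rel (KisRel.braid₂ h)
  simp only [map_mul] at hrel
  exact hrel

theorem kmk_ofList (l : List (Fin n)) : kmk n (FreeMonoid.ofList l) = (l.map ka).prod := by
  induction l with
  | nil => exact map_one _
  | cons a t ih => rw [FreeMonoid.ofList_cons, map_mul, ih, List.map_cons, List.prod_cons]; rfl

theorem eX_eq_prod (X : Finset (Fin n)) : eX X = ((X.sort (· ≤ ·)).reverse.map ka).prod :=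
  kmk_ofList _

theorem prod_map_ka_mem_closure {s : Set (Fin n)} {l : List (Fin n)} (hl : ∀ i ∈ l, i ∈ s) :
    (l.map ka).prod ∈ Submonoid.closure (ka '' s) :=
  Submonoid.list_prod_mem _ fun _ hx => by
    obtain ⟨i, hi, rfl⟩ := List.mem_map.mp hx
    exact Submonoid.subset_closure (Set.mem_image_of_mem ka (hl i hi))

theorem eX_mem_closure (X : Finset (Fin n)) : eX X ∈ Submonoid.closure (ka '' X) := by
  rw [eX_eq_prod]
  exact prod_map_ka_mem_closure fun i hi => by simpa using hi

theorem ka_mul_mul_ka_of_mem_closure_Iio {w : Kiselman n}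
    (hw : w ∈ Submonoid.closure (ka '' Set.Iio j)) : ka j * w * ka j = ka j * w :=
  (isIdempotentElem_ka j).mul_mul_self_eq_self_mul_of_mem_closure
    (by rintro _ ⟨i, hi, rfl⟩; exact ka_mul_ka_mul_ka_of_gt hi) hw

theorem ka_mul_mul_ka_of_mem_closure_Ioi {w : Kiselman n}
    (hw : w ∈ Submonoid.closure (ka '' Set.Ioi j)) : ka j * w * ka j = w * ka j :=
  (isIdempotentElem_ka j).mul_mul_self_eq_mul_self_of_mem_closure
    (by rintro _ ⟨i, hi, rfl⟩; exact ka_mul_ka_mul_ka_of_lt hi) hw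

theorem prod_mul_ka_and_ka_mul_prod_of_mem {l : List (Fin n)} (hl : l.Pairwise (· > ·))
    (hj : j ∈ l) :
    (l.map ka).prod * ka j = (l.map ka).prod ∧ ka j * (l.map ka).prod = (l.map ka).prod := by
  obtain ⟨u, w, rfl⟩ := List.append_of_mem hj
  obtain ⟨-, hw, huw⟩ := List.pairwise_append.mp hl
  have hU := ka_mul_mul_ka_of_mem_closure_Ioi (j := j) (prod_map_ka_mem_closure (l := u)
    fun i hi => huw i hi j List.mem_cons_self)
  have hW := ka_mul_mul_ka_of_mem_closure_Iio (j := j) (prod_map_ka_mem_closure (l := w)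
    fun _ hi => List.rel_of_pairwise_cons hw hi)
  simp only [List.map_append, List.map_cons, List.prod_append, List.prod_cons]
  constructor
  · calc (u.map ka).prod * (ka j * (w.map ka).prod) * ka j
        = (u.map ka).prod * (ka j * (w.map ka).prod * ka j) := by simp only [mul_assoc]
      _ = (u.map ka).prod * (ka j * (w.map ka).prod) := by rw [hW]
  · calc ka j * ((u.map ka).prod * (ka j * (w.map ka).prod))
        = ka j * (u.map ka).prod * ka j * (w.map ka).prod := by simp only [mul_assoc]
      _ = (u.map ka).prod * (ka j * (w.map ka).prod) := by rw [hU, mul_assoc]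

theorem eX_mul_ka_and_ka_mul_eX {X : Finset (Fin n)} (hj : j ∈ X) :
    eX X * ka j = eX X ∧ ka j * eX X = eX X := by
  rw [eX_eq_prod]
  exact prod_mul_ka_and_ka_mul_prod_of_mem
    (List.pairwise_reverse.mpr (X.sortedLT_sort.pairwise)) (by simpa using hj)

def lift {M : Type*} [CommMonoid M] (f : Fin n → M) (hf : ∀ i, IsIdempotentElem (f i)) :
    Kiselman n →* M :=
  PresentedMonoid.lift f <| by
    rintro _ _ (i | @⟨i, j, -⟩ | @⟨i, j, -⟩) <;>
      simp only [map_mul, FreeMonoid.lift_eval_of]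
    · exact hf i
    · rw [mul_right_comm, hf i, mul_comm]
    · rw [mul_right_comm, hf j]

def omits (j : Fin n) : Kiselman n →* ℕ :=
  lift (fun i => if i = j then 0 else 1) fun i => by
    split_ifs
    exacts [IsIdempotentElem.zero, IsIdempotentElem.one]

theorem omits_eX (j : Fin n) (X : Finset (Fin n)) :
    omits j (eX X) = if j ∈ X then 0 else 1 := by
  rw [eX_eq_prod, map_list_prod, List.map_map]
  split_ifs with hj
  · exact List.prod_eq_zero (List.mem_map.mpr ⟨j, by simpa using hj, by simp [omits, lift, ka]⟩)
  · refine List.prod_eq_one fun x hx => ?_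
    obtain ⟨i, hi, rfl⟩ := List.mem_map.mp hx
    have hij : i ≠ j := fun h => hj (by simpa [h] using hi)
    simp [omits, lift, ka, hij]

theorem subset_of_eX_mul_eX_eq {X Y : Finset (Fin n)} (h : eX X * eX Y = eX X) : Y ⊆ X := by
  intro j hjY
  by_contra hjX
  simpa [omits_eX, hjY, hjX] using congrArg (omits j) h

theorem eX_mul_eX_eq_of_subset {X Y : Finset (Fin n)} (h : Y ⊆ X) :
    eX X * eX Y = eX X ∧ eX Y * eX X = eX X := by
  have hY : eX Y ∈ Submonoid.closure (ka '' X) :=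
    Submonoid.closure_mono (Set.image_mono h) (eX_mem_closure Y)
  exact ⟨Submonoid.mul_eq_left_of_mem_closure
      (by rintro _ ⟨j, hj, rfl⟩; exact (eX_mul_ka_and_ka_mul_eX hj).1) hY,
    Submonoid.mul_eq_right_of_mem_closure
      (by rintro _ ⟨j, hj, rfl⟩; exact (eX_mul_ka_and_ka_mul_eX hj).2) hY⟩

end Kiselman

/-- Proposition: for idempotents `e_X, e_Y` of `K_n` (every idempotent is of this form,
with content `X` resp. `Y`), the natural order `e_X ≤ e_Y` holds iff `Y ⊆ X`. -/
theorem kiselman_natural_order (n : ℕ) (X Y : Finset (Fin n)) :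
    (eX X * eX Y = eX X ∧ eX Y * eX X = eX X) ↔ Y ⊆ X :=
  ⟨fun h => Kiselman.subset_of_eX_mul_eX_eq h.1, Kiselman.eX_mul_eX_eq_of_subset⟩
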